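/- If Z is an outcast of a d-dimensional shift X, then there exists a strictly increasing sequence (Z_n)_{n∈ℕ} of subsystems of X such that Z₀ = Z and the closure of ∪_{n≥0} Z_n equals X. In particular, a shift possessing an outcast is not an isolated point of the space S^d. -/

import Mathlib

/-- The group `ℤ^d`. -/
abbrev ZD (d : ℕ) := Fin d → ℤ

/-- A configuration is a map `ℤ^d → ℤ`. -/
abbrev Config (d : ℕ) := ZD d → ℤ

/-- The shift map `σ^u`, defined by `σ^u(x)_v = x_{u+v}`. -/
def shiftMap {d : ℕ} (u : ZD d) (x : Config d) : Config d := fun v => x (u + v)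

/-- The sup norm `‖·‖_∞` on `ℤ^d`, valued in `ℕ`. -/
def normInf {d : ℕ} (n : ZD d) : ℕ := Finset.univ.sup fun i => (n i).natAbs

open Classical in
/-- The metric `δ` on configurations: `δ(x,y) = 2^{-min{‖n‖_∞ : x_n ≠ y_n}}`, `δ(x,x) = 0`. -/
noncomputable def deltaDist {d : ℕ} (x y : Config d) : ℝ :=
  if x = y then 0
  else (2 : ℝ) ^ (-((sInf {m : ℕ | ∃ n : ZD d, normInf n = m ∧ x n ≠ y n} : ℕ) : ℤ))

/-- The closure of a set of configurations with respect to the metric `δ`. -/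
def deltaClosure {d : ℕ} (A : Set (Config d)) : Set (Config d) :=
  {x | ∀ ε : ℝ, 0 < ε → ∃ a ∈ A, deltaDist x a < ε}

/-- A set of configurations is closed for `δ` when it contains all its limit points. -/
def IsDeltaClosed {d : ℕ} (A : Set (Config d)) : Prop := deltaClosure A ⊆ A

/-- A `d`-dimensional shift: a nonempty set of configurations over a common finite
alphabet, closed for `δ` and invariant under every shift map. -/
def IsShift {d : ℕ} (X : Set (Config d)) : Prop :=
  X.Nonempty ∧ (∃ A : Finset ℤ, ∀ x ∈ X, ∀ v : ZD d, x v ∈ A) ∧ IsDeltaClosed X ∧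
    ∀ u : ZD d, ∀ x ∈ X, shiftMap u x ∈ X

/-- The Hausdorff metric `δ_H` on the space of shifts. -/
noncomputable def deltaH {d : ℕ} (X Z : Set (Config d)) : ℝ :=
  max (⨆ x : X, ⨅ z : Z, deltaDist (x : Config d) (z : Config d))
      (⨆ z : Z, ⨅ x : X, deltaDist (x : Config d) (z : Config d))

/-- A subsystem of a shift `X`: a nonempty closed shift-invariant subset of `X`. -/
def IsSubsystem {d : ℕ} (Z X : Set (Config d)) : Prop :=
  Z.Nonempty ∧ Z ⊆ X ∧ IsDeltaClosed Z ∧ ∀ u : ZD d, ∀ z ∈ Z, shiftMap u z ∈ Z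

/-- A maximal subsystem of `X`: a proper subsystem such that any subsystem strictly
between it and `X` equals `X`. -/
def IsMaximalSubsystem {d : ℕ} (Z X : Set (Config d)) : Prop :=
  IsSubsystem Z X ∧ Z ≠ X ∧ ∀ Z', IsSubsystem Z' X → Z ⊂ Z' → Z' = X

/-- An outcast of `X`: a proper subsystem contained in no maximal subsystem of `X`. -/
def IsOutcast {d : ℕ} (Z X : Set (Config d)) : Prop :=
  IsSubsystem Z X ∧ Z ≠ X ∧ ∀ M, IsMaximalSubsystem M X → ¬ Z ⊆ M

/-- A pattern with finite support `U` (given by the values of `p` on `U`) appears in the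
configuration `x`. -/
def PatternAppears {d : ℕ} (U : Finset (ZD d)) (p : ZD d → ℤ) (x : Config d) : Prop :=
  ∃ u : ZD d, ∀ v ∈ U, x (u + v) = p v

/-- The set of configurations over the alphabet `A` avoiding every pattern in `F`. -/
def XofF {d : ℕ} (A : Finset ℤ) (F : Set (Finset (ZD d) × (ZD d → ℤ))) : Set (Config d) :=
  {x | (∀ v : ZD d, x v ∈ A) ∧ ∀ q ∈ F, ¬ PatternAppears q.1 q.2 x}

/-- A shift of finite type: defined by a finite alphabet and a finite set of forbidden
patterns. -/
def IsSFT {d : ℕ} (X : Set (Config d)) : Prop :=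
  ∃ (A : Finset ℤ) (F : Finset (Finset (ZD d) × (ZD d → ℤ))), X = XofF A (F : Set _)

/-- `X` is an isolated point of the subspace `S` (with the Hausdorff metric `δ_H`). -/
def IsolatedIn {d : ℕ} (S : Set (Set (Config d))) (X : Set (Config d)) : Prop :=
  X ∈ S ∧ ∃ ε : ℝ, 0 < ε ∧ ∀ Z ∈ S, deltaH X Z < ε → Z = X

/-- The orbit of a configuration under the shift action. -/
def orbit {d : ℕ} (x : Config d) : Set (Config d) := {y | ∃ u : ZD d, y = shiftMap u x}

/-- A shift is transitive when some point has dense orbit. -/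
def IsTransitive {d : ℕ} (X : Set (Config d)) : Prop :=
  IsShift X ∧ ∃ x ∈ X, X ⊆ deltaClosure (orbit x)

/-- A shift is minimal when its only subsystem is itself. -/
def IsMinimalShift {d : ℕ} (X : Set (Config d)) : Prop :=
  IsShift X ∧ ∀ Z, IsSubsystem Z X → Z = X


/-!
Zorn's lemma turns an outcast `Y` into a nonempty chain of proper subsystems containing `Y`
with no upper bound among them. The closure of its union is a subsystem containing `Y` and
every member of the chain, so it can only be `X` itself. Over a finite alphabet `X` has only
finitely many patterns on each box, and each of them is seen by a single member of the chain;
hence for every `m` there is a proper subsystem strictly above `Y` (again an outcast) that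
contains every pattern of `X` of radius `m`. Iterating gives the chain `Z = W 0 ⊂ W 1 ⊂ ⋯`
with `W (m + 1)` within Hausdorff distance `2^{-m}` of `X`.
-/

section Outcast

variable {d : ℕ}

lemma natAbs_le_normInf (u : ZD d) (i : Fin d) : (u i).natAbs ≤ normInf u :=
  Finset.le_sup (f := fun i => (u i).natAbs) (Finset.mem_univ i)

lemma normInf_le_iff {u : ZD d} {m : ℕ} : normInf u ≤ m ↔ ∀ i, (u i).natAbs ≤ m := by
  simp [normInf, Finset.sup_le_iff]

lemma normInf_add_le (u v : ZD d) : normInf (u + v) ≤ normInf u + normInf v :=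
  normInf_le_iff.mpr fun i => (Int.natAbs_add_le _ _).trans
    (add_le_add (natAbs_le_normInf u i) (natAbs_le_normInf v i))

lemma finite_setOf_normInf_lt (m : ℕ) : {v : ZD d | normInf v < m}.Finite :=
  (Set.Finite.pi fun _ => Set.finite_Icc (-(m : ℤ)) m).subset
    fun v (hv : normInf v < m) i _ => by
      have := natAbs_le_normInf v i
      simp only [Set.mem_Icc]
      omega

def AgreeOn (m : ℕ) (x y : Config d) : Prop := ∀ v : ZD d, normInf v < m → x v = y v

def Approximates (m : ℕ) (Y X : Set (Config d)) : Prop := ∀ x ∈ X, ∃ y ∈ Y, AgreeOn m x y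

def window (m : ℕ) (x : Config d) : {v : ZD d // normInf v < m} → ℤ := fun v => x v

lemma window_eq_window_iff {m : ℕ} {x y : Config d} :
    window m x = window m y ↔ AgreeOn m x y := by
  simp [window, funext_iff, AgreeOn]

lemma finite_window_image {X : Set (Config d)} {A : Finset ℤ} (hA : ∀ x ∈ X, ∀ v, x v ∈ A)
    (m : ℕ) : (window m '' X).Finite :=
  have : Finite {v : ZD d // normInf v < m} := (finite_setOf_normInf_lt m).to_subtype
  (Set.Finite.pi fun _ => A.finite_toSet).subset <| by
    rintro _ ⟨x, hx, rfl⟩ v -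
    exact hA x hx v

lemma deltaDist_self (x : Config d) : deltaDist x x = 0 := by simp [deltaDist]

lemma deltaDist_nonneg (x y : Config d) : 0 ≤ deltaDist x y := by
  unfold deltaDist
  split_ifs <;> positivity

lemma deltaDist_le_of_agreeOn {m : ℕ} {x y : Config d} (h : AgreeOn m x y) :
    deltaDist x y ≤ (2 : ℝ) ^ (-(m : ℤ)) := by
  unfold deltaDist
  split_ifs with hxy
  · positivity
  obtain ⟨n, hn⟩ := Function.ne_iff.mp hxy
  obtain ⟨k, hk, hxyk⟩ :=
    Nat.sInf_mem (s := {k | ∃ n, normInf n = k ∧ x n ≠ y n}) ⟨normInf n, n, rfl, hn⟩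
  have hmk : m ≤ normInf k := not_lt.mp fun hlt => hxyk (h k hlt)
  exact zpow_le_zpow_right₀ one_le_two (by omega)

lemma agreeOn_of_deltaDist_lt {m : ℕ} {x y : Config d}
    (h : deltaDist x y < (2 : ℝ) ^ (-(m : ℤ))) : AgreeOn (m + 1) x y := by
  intro v hv
  by_contra hne
  have hxy : x ≠ y := fun hxy => hne (hxy ▸ rfl)
  rw [deltaDist, if_neg hxy] at h
  have hle := Nat.sInf_le (s := {k | ∃ n, normInf n = k ∧ x n ≠ y n}) (m := normInf v)
    ⟨v, rfl, hne⟩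
  have hlt := (zpow_lt_zpow_iff_right₀ (one_lt_two (α := ℝ))).mp h
  omega

lemma exists_two_zpow_neg_lt {ε : ℝ} (hε : 0 < ε) :
    ∃ m : ℕ, (2 : ℝ) ^ (-(m : ℤ)) < ε := by
  obtain ⟨m, hm⟩ := exists_pow_lt_of_lt_one hε (by norm_num : (2 : ℝ)⁻¹ < 1)
  exact ⟨m, by simpa [zpow_neg, inv_pow] using hm⟩

lemma mem_deltaClosure_iff {A : Set (Config d)} {x : Config d} :
    x ∈ deltaClosure A ↔ ∀ m : ℕ, ∃ a ∈ A, AgreeOn m x a := by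
  constructor
  · intro h m
    obtain ⟨a, ha, hxa⟩ := h _ (zpow_pos two_pos (-(m : ℤ)))
    exact ⟨a, ha, fun v hv => agreeOn_of_deltaDist_lt hxa v (by omega)⟩
  · intro h ε hε
    obtain ⟨m, hm⟩ := exists_two_zpow_neg_lt hε
    obtain ⟨a, ha, hxa⟩ := h m
    exact ⟨a, ha, (deltaDist_le_of_agreeOn hxa).trans_lt hm⟩

lemma subset_deltaClosure (A : Set (Config d)) : A ⊆ deltaClosure A := fun a ha =>
  mem_deltaClosure_iff.mpr fun _ => ⟨a, ha, fun _ _ => rfl⟩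

lemma isDeltaClosed_deltaClosure (A : Set (Config d)) : IsDeltaClosed (deltaClosure A) := by
  intro x hx
  refine mem_deltaClosure_iff.mpr fun m => ?_
  obtain ⟨y, hy, hxy⟩ := mem_deltaClosure_iff.mp hx m
  obtain ⟨a, ha, hya⟩ := mem_deltaClosure_iff.mp hy m
  exact ⟨a, ha, fun v hv => (hxy v hv).trans (hya v hv)⟩

lemma deltaClosure_subset_of_isDeltaClosed {A B : Set (Config d)} (hAB : A ⊆ B)
    (hB : IsDeltaClosed B) : deltaClosure A ⊆ B := fun _ hx =>
  hB <| mem_deltaClosure_iff.mpr fun m =>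
    let ⟨a, ha, hxa⟩ := mem_deltaClosure_iff.mp hx m
    ⟨a, hAB ha, hxa⟩

lemma shiftMap_mem_deltaClosure {A : Set (Config d)}
    (hA : ∀ u : ZD d, ∀ a ∈ A, shiftMap u a ∈ A) (u : ZD d) {x : Config d}
    (hx : x ∈ deltaClosure A) : shiftMap u x ∈ deltaClosure A := by
  refine mem_deltaClosure_iff.mpr fun m => ?_
  obtain ⟨a, ha, hxa⟩ := mem_deltaClosure_iff.mp hx (m + normInf u)
  refine ⟨shiftMap u a, hA u a ha, fun v hv => hxa (u + v) ?_⟩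
  have := normInf_add_le u v
  omega

lemma isSubsystem_deltaClosure_sUnion {X : Set (Config d)} {c : Set (Set (Config d))}
    (hc : c.Nonempty) (hcX : ∀ s ∈ c, IsSubsystem s X) (hX : IsDeltaClosed X) :
    IsSubsystem (deltaClosure (⋃₀ c)) X := by
  obtain ⟨s, hs⟩ := hc
  obtain ⟨y, hy⟩ := (hcX s hs).1
  refine ⟨⟨y, subset_deltaClosure _ ⟨s, hs, hy⟩⟩,
    deltaClosure_subset_of_isDeltaClosed (Set.sUnion_subset fun s hs => (hcX s hs).2.1) hX,
    isDeltaClosed_deltaClosure _, fun u _ => shiftMap_mem_deltaClosure ?_ u⟩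
  rintro u a ⟨s, hs, ha⟩
  exact ⟨s, hs, (hcX s hs).2.2.2 u a ha⟩

lemma exists_finite_approximates {X U : Set (Config d)}
    (hA : ∃ A : Finset ℤ, ∀ x ∈ X, ∀ v, x v ∈ A) (hXU : X ⊆ deltaClosure U)
    (m : ℕ) :
    ∃ S ⊆ U, S.Finite ∧ Approximates m S X := by
  obtain ⟨A, hA⟩ := hA
  have hwin : window m '' X ⊆ window m '' U := by
    rintro _ ⟨x, hx, rfl⟩
    obtain ⟨a, ha, hxa⟩ := mem_deltaClosure_iff.mp (hXU hx) m
    exact ⟨a, ha, (window_eq_window_iff.mpr hxa).symm⟩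
  obtain ⟨S, hSU, hSfin, hS⟩ := Set.exists_subset_image_finite_and.mp
    ⟨_, hwin, finite_window_image hA m, subset_rfl⟩
  refine ⟨S, hSU, hSfin, fun x hx => ?_⟩
  obtain ⟨y, hy, hyx⟩ := hS ⟨x, hx, rfl⟩
  exact ⟨y, hy, window_eq_window_iff.mp hyx.symm⟩

lemma exists_isChain_forall_not_subset {α : Type*} {P : Set (Set α)} (hP : P.Nonempty)
    (hmax : ∀ M, ¬ Maximal (· ∈ P) M) :
    ∃ c ⊆ P, IsChain (· ⊆ ·) c ∧ c.Nonempty ∧ ∀ Y ∈ P, ∃ s ∈ c, ¬ s ⊆ Y := by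
  by_contra! h
  obtain ⟨Y, hY⟩ := hP
  obtain ⟨M, -, hM⟩ := zorn_subset_nonempty P h Y hY
  exact hmax M hM

def properSubsystemsAbove (Y X : Set (Config d)) : Set (Set (Config d)) :=
  {W | IsSubsystem W X ∧ W ≠ X ∧ Y ⊆ W}

lemma IsOutcast.mono {Y T X : Set (Config d)} (hY : IsOutcast Y X)
    (hT : T ∈ properSubsystemsAbove Y X) : IsOutcast T X :=
  ⟨hT.1, hT.2.1, fun M hM hTM => hY.2.2 M hM (hT.2.2.trans hTM)⟩

lemma IsOutcast.not_maximal {Y X : Set (Config d)} (hY : IsOutcast Y X) (M : Set (Config d)) :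
    ¬ Maximal (· ∈ properSubsystemsAbove Y X) M := by
  rintro ⟨⟨hM, hMX, hYM⟩, hmax⟩
  refine hY.2.2 M ⟨hM, hMX, fun Z' hZ' hMZ' => ?_⟩ hYM
  by_contra hZ'X
  exact hMZ'.not_subset (hmax ⟨hZ', hZ'X, hYM.trans hMZ'.subset⟩ hMZ'.subset)

lemma IsOutcast.exists_ssuperset_approximates {Y X : Set (Config d)} (hY : IsOutcast Y X)
    (hX : IsShift X) (m : ℕ) : ∃ Y', IsOutcast Y' X ∧ Y ⊂ Y' ∧ Approximates m Y' X := by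
  have hYP : Y ∈ properSubsystemsAbove Y X := ⟨hY.1, hY.2.1, subset_rfl⟩
  obtain ⟨c, hcP, hc, hcne, hunb⟩ :=
    exists_isChain_forall_not_subset ⟨Y, hYP⟩ hY.not_maximal
  have hcU : ∀ s ∈ c, s ⊆ deltaClosure (⋃₀ c) := fun s hs =>
    (Set.subset_sUnion_of_mem hs).trans (subset_deltaClosure _)
  have hdense : deltaClosure (⋃₀ c) = X := by
    by_contra hUX
    obtain ⟨s₀, hs₀⟩ := hcne
    obtain ⟨s, hs, hsU⟩ := hunb _ ⟨isSubsystem_deltaClosure_sUnion ⟨s₀, hs₀⟩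
      (fun s hs => (hcP hs).1) hX.2.2.1, hUX, (hcP hs₀).2.2.trans (hcU s₀ hs₀)⟩
    exact hsU (hcU s hs)
  obtain ⟨s, hs, hsY⟩ := hunb Y hYP
  obtain ⟨p, hps, hpY⟩ := Set.not_subset.mp hsY
  obtain ⟨S, hSU, hSfin, hS⟩ := exists_finite_approximates hX.2.1 hdense.ge m
  -- a member of the chain containing `S` and a point outside `Y` does the job
  obtain ⟨t, htc, hSt⟩ := hc.directedOn.exists_mem_subset_of_finite_of_subset_sUnion hcne
    (hSfin.insert p) (Set.insert_subset ⟨s, hs, hps⟩ hSU)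
  refine ⟨t, hY.mono (hcP htc), ssubset_of_subset_not_subset (hcP htc).2.2
    fun htY => hpY (htY (hSt (Set.mem_insert p S))), fun x hx => ?_⟩
  obtain ⟨y, hy, hxy⟩ := hS x hx
  exact ⟨y, hSt (Set.mem_insert_of_mem p hy), hxy⟩

lemma IsOutcast.exists_ssubset_seq {Z X : Set (Config d)} (hZ : IsOutcast Z X)
    (hX : IsShift X) : ∃ W : ℕ → Set (Config d), W 0 = Z ∧
      ∀ n, IsOutcast (W n) X ∧ W n ⊂ W (n + 1) ∧ Approximates n (W (n + 1)) X := by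
  choose! F hF using fun Y (hY : IsOutcast Y X) m => hY.exists_ssuperset_approximates hX m
  let W : ℕ → Set (Config d) := fun n => Nat.rec Z (fun k Y => F Y k) n
  have hW : ∀ n, IsOutcast (W n) X := by
    intro n
    induction n with
    | zero => exact hZ
    | succ n ih => exact (hF _ ih n).1
  exact ⟨W, rfl, fun n => ⟨hW n, (hF _ (hW n) n).2⟩⟩

lemma deltaClosure_iUnion_eq_of_approximates {X : Set (Config d)} {W : ℕ → Set (Config d)}
    (hX : IsDeltaClosed X) (hWX : ∀ n, W n ⊆ X) (hW : ∀ m, ∃ n, Approximates m (W n) X) :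
    deltaClosure (⋃ n, W n) = X := by
  refine (deltaClosure_subset_of_isDeltaClosed (Set.iUnion_subset hWX) hX).antisymm
    fun x hx => mem_deltaClosure_iff.mpr fun m => ?_
  obtain ⟨n, hn⟩ := hW m
  obtain ⟨y, hy, hxy⟩ := hn x hx
  exact ⟨y, Set.mem_iUnion_of_mem n hy, hxy⟩

lemma deltaH_le_of_approximates {X Y : Set (Config d)} {m : ℕ} (hYX : Y ⊆ X)
    (hY : Approximates m Y X) : deltaH X Y ≤ (2 : ℝ) ^ (-(m : ℤ)) := by
  refine max_le (Real.iSup_le (fun x => ?_) (by positivity))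
    (Real.iSup_le (fun y => ?_) (by positivity))
  · obtain ⟨y, hy, hxy⟩ := hY x x.2
    exact (ciInf_le ⟨0, Set.forall_mem_range.2 fun _ => deltaDist_nonneg _ _⟩ ⟨y, hy⟩).trans
      (deltaDist_le_of_agreeOn hxy)
  · refine (ciInf_le ⟨0, Set.forall_mem_range.2 fun _ => deltaDist_nonneg _ _⟩
      ⟨y, hYX y.2⟩).trans ?_
    rw [deltaDist_self]
    positivity

lemma IsSubsystem.isShift {Y X : Set (Config d)} (hY : IsSubsystem Y X)
    (hA : ∃ A : Finset ℤ, ∀ x ∈ X, ∀ v, x v ∈ A) : IsShift Y :=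
  let ⟨A, hA⟩ := hA
  ⟨hY.1, ⟨A, fun y hy => hA y (hY.2.1 hy)⟩, hY.2.2⟩

lemma not_isolatedIn_of_approximates {X : Set (Config d)}
    (hA : ∃ A : Finset ℤ, ∀ x ∈ X, ∀ v, x v ∈ A)
    (h : ∀ m, ∃ Y, IsSubsystem Y X ∧ Y ≠ X ∧ Approximates m Y X) :
    ¬ IsolatedIn {Y : Set (Config d) | IsShift Y} X := by
  rintro ⟨-, ε, hε, hiso⟩
  obtain ⟨m, hm⟩ := exists_two_zpow_neg_lt hε
  obtain ⟨Y, hY, hYX, hYm⟩ := h m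
  exact hYX (hiso Y (hY.isShift hA) ((deltaH_le_of_approximates hY.2.1 hYm).trans_lt hm))

end Outcast

theorem outcast_gives_increasing_chain_and_not_isolated_general
    (d : ℕ) (X Z : Set (Config d)) (hX : IsShift X) (hZ : IsOutcast Z X) :
    (∃ W : ℕ → Set (Config d), (∀ n : ℕ, IsSubsystem (W n) X) ∧
      (∀ n : ℕ, W n ⊂ W (n + 1)) ∧ W 0 = Z ∧ deltaClosure (⋃ n : ℕ, W n) = X) ∧
    ¬ IsolatedIn {Y : Set (Config d) | IsShift Y} X := by
  obtain ⟨W, hW0, hW⟩ := hZ.exists_ssubset_seq hX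
  refine ⟨⟨W, fun n => (hW n).1.1, fun n => (hW n).2.1, hW0, ?_⟩, ?_⟩
  · exact deltaClosure_iUnion_eq_of_approximates hX.2.2.1 (fun n => (hW n).1.1.2.1)
      fun m => ⟨m + 1, (hW m).2.2⟩
  · exact not_isolatedIn_of_approximates hX.2.1
      fun m => ⟨W (m + 1), (hW (m + 1)).1.1, (hW (m + 1)).1.2.1, (hW m).2.2⟩

/-- If `Z` is an outcast of a shift `X`, there is a strictly increasing
sequence of subsystems of `X` starting at `Z` whose union is dense in `X`; in
particular, a shift possessing an outcast is not isolated in `S^d`. -/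
theorem outcast_gives_increasing_chain_and_not_isolated
    (d : ℕ) (hd : 1 ≤ d) (X Z : Set (Config d)) (hX : IsShift X) (hZ : IsOutcast Z X) :
    (∃ W : ℕ → Set (Config d), (∀ n : ℕ, IsSubsystem (W n) X) ∧
      (∀ n : ℕ, W n ⊂ W (n + 1)) ∧ W 0 = Z ∧ deltaClosure (⋃ n : ℕ, W n) = X) ∧
    ¬ IsolatedIn {Y : Set (Config d) | IsShift Y} X :=
  outcast_gives_increasing_chain_and_not_isolated_general d X Z hX hZ
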